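/- Hölder continuous functions have bounded fractional variation (example in Section 7). Let d ≥ 1 and α, β ∈ (0,1) with α + β > 1. There exists a constant C ≥ 0, depending only on d, α, β, such that for every β-Hölder continuous function f : [0,1]^d → ℝ one has V̂^α f ≤ C (‖f‖_∞ + Lip^β(f)). -/

import Mathlib

open MeasureTheory Filter
open scoped BigOperators ENNReal Classical

noncomputable section

/-- Points of `ℝ^d` with the Euclidean norm. -/
abbrev Euc (d : ℕ) := EuclideanSpace ℝ (Fin d)

/-- The closed dyadic cube of generation `n` with lower corner `2^{-n} k` inside `[0,1]^d`. -/
def dyCube (d n : ℕ) (k : Fin d → ℕ) : Set (Euc d) :=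
  {x | ∀ i, (k i : ℝ) / 2 ^ n ≤ x i ∧ x i ≤ ((k i : ℝ) + 1) / 2 ^ n}

/-- The unit cube `[0,1]^d`. -/
def uCube (d : ℕ) : Set (Euc d) := dyCube d 0 (fun _ => 0)

/-- Volume `2^{-nd}` of a dyadic cube of generation `n`. -/
def dyVol (d n : ℕ) : ℝ := ((2 : ℝ) ^ (n * d))⁻¹

/-- A real valued function on the dyadic cubes of `[0,1]^d` (encoded by generation and
lower-corner index) is additive if its value on each cube is the sum of its values
on the `2^d` children. -/
def IsAdditiveDy (d : ℕ) (ω : ∀ _ : ℕ, (Fin d → ℕ) → ℝ) : Prop :=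
  ∀ n (k : Fin d → ℕ), (∀ i, k i < 2 ^ n) →
    ω n k = ∑ j : Fin d → Fin 2, ω (n + 1) (fun i => 2 * k i + (j i : ℕ))

/-- The Haar function `g_{n,k,ε}` on `[0,1]^d`. -/
def haarF (d n : ℕ) (k : Fin d → ℕ) (ε : Fin d → Bool) (x : Euc d) : ℝ :=
  if ∀ i, (k i : ℝ) / 2 ^ n ≤ x i ∧ x i < ((k i : ℝ) + 1) / 2 ^ n then
    (2 : ℝ) ^ (((n * d : ℕ) : ℝ) / 2) *
      ∏ i, (if ε i then (if (2 : ℝ) ^ n * x i - (k i : ℝ) < 1 / 2 then (1 : ℝ) else -1) else 1)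
  else 0

/-- The Faber–Schauder coefficient `a_{n,k,ε}(ω)` of an additive function on dyadic cubes. -/
def fsCoeff (d : ℕ) (ω : ∀ _ : ℕ, (Fin d → ℕ) → ℝ) (n : ℕ) (k : Fin d → ℕ)
    (ε : Fin d → Bool) : ℝ :=
  (2 : ℝ) ^ (((n * d : ℕ) : ℝ) / 2) *
    ∑ j : Fin d → Fin 2,
      (∏ i, (if ε i then (if j i = 0 then (1 : ℝ) else -1) else 1)) *
        ω (n + 1) (fun i => 2 * k i + (j i : ℕ))


/-- The variation `V̂^α f ∈ [0,∞]`: supremum of `∫ f g` over `g ∈ L^∞([0,1]^d)` with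
`|∫_K g| ≤ |K|^γ` for every dyadic cube `K`, where `γ = (α + d - 1)/d`. -/
def hatV (d : ℕ) (α : ℝ) (f : Euc d → ℝ) : ℝ≥0∞ :=
  ⨆ (g : Euc d → ℝ) (_ : MemLp g ⊤ (volume.restrict (uCube d)))
    (_ : ∀ n (k : Fin d → ℕ), (∀ i, k i < 2 ^ n) →
      |∫ x in dyCube d n k, g x| ≤ dyVol d n ^ ((α + (d : ℝ) - 1) / d)),
    ENNReal.ofReal (∫ x in uCube d, f x * g x)

lemma dyCube_eq (d n : ℕ) (k : Fin d → ℕ) :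
    dyCube d n k = (MeasurableEquiv.toLp 2 (Fin d → ℝ)).symm ⁻¹'
      (Set.univ.pi fun i => Set.Icc ((k i : ℝ) / 2 ^ n) (((k i : ℝ) + 1) / 2 ^ n)) := by
  ext x
  simp only [dyCube, Set.mem_setOf_eq, Set.mem_preimage, Set.mem_pi, Set.mem_univ,
    forall_true_left, Set.mem_Icc]
  rfl

lemma volume_dyCube (d n : ℕ) (k : Fin d → ℕ) :
    volume (dyCube d n k) = ENNReal.ofReal (dyVol d n) := by
  rw [dyCube_eq,
    (EuclideanSpace.volume_preserving_symm_measurableEquiv_toLp (Fin d)).measure_preimage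
      (MeasurableSet.univ_pi fun i => measurableSet_Icc).nullMeasurableSet]
  rw [volume_pi, Measure.pi_pi]
  simp only [Real.volume_Icc]
  have : ∀ i : Fin d, ((k i : ℝ) + 1) / 2 ^ n - (k i : ℝ) / 2 ^ n = (2 ^ n)⁻¹ := by
    intro i; field_simp; ring
  simp only [this]
  rw [Finset.prod_const, Finset.card_univ, Fintype.card_fin, dyVol,
    ← ENNReal.ofReal_pow (by positivity)]
  congr 1
  rw [pow_mul, inv_pow]

lemma hyperplane_null (d : ℕ) (i : Fin d) (c : ℝ) :
    volume {x : Euc d | x i = c} = 0 := by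
  have : {x : Euc d | x i = c} = (MeasurableEquiv.toLp 2 (Fin d → ℝ)).symm ⁻¹'
      {y : Fin d → ℝ | y i = c} := rfl
  have hm : MeasurableSet {y : Fin d → ℝ | y i = c} :=
    (measurableSet_singleton c).preimage (measurable_pi_apply i)
  rw [this,
    (EuclideanSpace.volume_preserving_symm_measurableEquiv_toLp (Fin d)).measure_preimage
      hm.nullMeasurableSet]
  rw [volume_pi]
  exact Measure.pi_hyperplane (fun _ => (volume : Measure ℝ)) i c

lemma isClosed_dyCube (d n : ℕ) (k : Fin d → ℕ) : IsClosed (dyCube d n k) := by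
  have : dyCube d n k = ⋂ i, ((fun x : Euc d => x i) ⁻¹'
      Set.Icc ((k i : ℝ) / 2 ^ n) (((k i : ℝ) + 1) / 2 ^ n)) := by
    ext x; simp [dyCube, Set.mem_Icc]
  rw [this]
  exact isClosed_iInter fun i =>
    IsClosed.preimage ((continuous_apply i).comp (EuclideanSpace.equiv (Fin d) ℝ).toHomeomorph.continuous) isClosed_Icc

lemma measurableSet_dyCube (d n : ℕ) (k : Fin d → ℕ) : MeasurableSet (dyCube d n k) :=
  (isClosed_dyCube d n k).measurableSet

lemma inter_null_dyCube {d n : ℕ} {k k' : Fin d → ℕ} (i : Fin d) (hik : k i < k' i) :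
    volume (dyCube d n k ∩ dyCube d n k') = 0 := by
  have hsub : dyCube d n k ∩ dyCube d n k' ⊆ {x : Euc d | x i = ((k i : ℝ) + 1) / 2 ^ n} := by
    rintro x ⟨hxa, hxb⟩
    have h1 := (hxa i).2
    have h2 := (hxb i).1
    have h3 : ((k i : ℝ) + 1) / 2 ^ n ≤ (k' i : ℝ) / 2 ^ n := by
      have : (k i : ℝ) + 1 ≤ (k' i : ℝ) := by exact_mod_cast hik
      exact div_le_div_of_nonneg_right this (by positivity) |>.trans le_rfl
    have := h3.trans h2
    exact le_antisymm (h1.trans (le_refl _)) this |>.symm ▸ rfl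
  exact measure_mono_null hsub (hyperplane_null d i _)

lemma aedisjoint_dyCube {d n : ℕ} {k k' : Fin d → ℕ} (i : Fin d) (hik : k i ≠ k' i) :
    AEDisjoint volume (dyCube d n k) (dyCube d n k') := by
  rcases lt_or_gt_of_ne hik with h | h
  · exact inter_null_dyCube i h
  · rw [AEDisjoint, Set.inter_comm]; exact inter_null_dyCube i h

lemma half_div (a : ℝ) (n : ℕ) : a / 2 ^ n = (2 * a) / 2 ^ (n + 1) := by
  rw [pow_succ]; ring

lemma dyCube_union (d n : ℕ) (k : Fin d → ℕ) :
    dyCube d n k = ⋃ j : Fin d → Fin 2, dyCube d (n + 1) (fun i => 2 * k i + (j i : ℕ)) := by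
  have hD : (0:ℝ) < 2 ^ (n+1) := by positivity
  ext x
  simp only [Set.mem_iUnion, dyCube, Set.mem_setOf_eq]
  constructor
  · intro hx
    refine ⟨fun i => if x i ≤ (2 * (k i : ℝ) + 1) / 2 ^ (n + 1) then 0 else 1, fun i => ?_⟩
    have h1 := (hx i).1
    have h2 := (hx i).2
    rw [half_div, div_le_iff₀ hD] at h1
    rw [half_div, le_div_iff₀ hD] at h2
    simp only []
    rcases le_or_gt (x i) ((2 * (k i : ℝ) + 1) / 2 ^ (n + 1)) with h | h
    · rw [le_div_iff₀ hD] at h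
      rw [if_pos (by rw [le_div_iff₀ hD]; exact h)]
      refine ⟨?_, ?_⟩
      · rw [div_le_iff₀ hD]; push_cast [Fin.val_zero, Fin.val_one]; linarith
      · rw [le_div_iff₀ hD]; push_cast [Fin.val_zero, Fin.val_one]; linarith
    · rw [div_lt_iff₀ hD] at h
      rw [if_neg (by rw [not_le, div_lt_iff₀ hD]; exact h)]
      refine ⟨?_, ?_⟩
      · rw [div_le_iff₀ hD]; push_cast [Fin.val_zero, Fin.val_one]; linarith
      · rw [le_div_iff₀ hD]; push_cast [Fin.val_zero, Fin.val_one]; linarith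
  · rintro ⟨j, hj⟩ i
    have h1 := (hj i).1
    have h2 := (hj i).2
    have hji : ((j i : ℕ) : ℝ) ≤ 1 := by
      have : (j i : ℕ) ≤ 1 := Nat.lt_succ_iff.mp (j i).2
      exact_mod_cast this
    rw [div_le_iff₀ hD] at h1
    rw [le_div_iff₀ hD] at h2
    push_cast at h1 h2
    refine ⟨?_, ?_⟩
    · rw [half_div, div_le_iff₀ hD]; push_cast [Fin.val_zero, Fin.val_one]; linarith
    · rw [half_div, le_div_iff₀ hD]; push_cast [Fin.val_zero, Fin.val_one]; linarith

lemma exists_dyIdx (n : ℕ) (t : ℝ) (h0 : 0 ≤ t) (h1 : t ≤ 1) :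
    ∃ m : ℕ, m < 2 ^ n ∧ (m : ℝ) / 2 ^ n ≤ t ∧ t ≤ ((m : ℝ) + 1) / 2 ^ n := by
  have hD : (0:ℝ) < 2 ^ n := by positivity
  rcases le_or_gt (2 ^ n : ℕ) ⌊2 ^ n * t⌋₊ with h | h
  · refine ⟨2 ^ n - 1, Nat.sub_lt (Nat.two_pow_pos n) one_pos, ?_, ?_⟩
    · rw [div_le_iff₀ hD]
      have : ((2:ℝ) ^ n) ≤ 2 ^ n * t := by
        calc ((2:ℝ) ^ n) = ((2 ^ n : ℕ) : ℝ) := by push_cast; ring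
        _ ≤ (⌊2 ^ n * t⌋₊ : ℝ) := by exact_mod_cast h
        _ ≤ 2 ^ n * t := Nat.floor_le (by positivity)
      have h2 : ((2 ^ n - 1 : ℕ) : ℝ) ≤ 2 ^ n - 1 := by
        push_cast [Nat.cast_sub (Nat.one_le_two_pow)]; ring_nf; norm_num
      nlinarith
    · rw [le_div_iff₀ hD]
      have h2 : ((2 ^ n - 1 : ℕ) : ℝ) + 1 = 2 ^ n := by
        push_cast [Nat.cast_sub (Nat.one_le_two_pow)]; ring
      rw [h2]
      nlinarith
  · refine ⟨⌊2 ^ n * t⌋₊, h, ?_, ?_⟩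
    · rw [div_le_iff₀ hD]
      calc (⌊2 ^ n * t⌋₊ : ℝ) ≤ 2 ^ n * t := Nat.floor_le (by positivity)
      _ = t * 2 ^ n := by ring
    · rw [le_div_iff₀ hD]
      have := Nat.lt_floor_add_one (2 ^ n * t)
      nlinarith [this]

lemma dyCube_subset_uCube {d n : ℕ} {k : Fin d → ℕ} (hk : ∀ i, k i < 2 ^ n) :
    dyCube d n k ⊆ uCube d := by
  intro x hx i
  have hD : (0:ℝ) < 2 ^ n := by positivity
  have h1 := (hx i).1
  have h2 := (hx i).2
  simp only [Nat.cast_zero, pow_zero, zero_div, Nat.cast_ofNat]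
  norm_num
  constructor
  · refine le_trans ?_ h1
    positivity
  · refine h2.trans ?_
    rw [div_le_one hD]
    have : ((k i : ℝ)) + 1 ≤ ((2 ^ n : ℕ) : ℝ) := by exact_mod_cast hk i
    push_cast at this
    linarith

lemma uCube_union (d n : ℕ) :
    uCube d = ⋃ j : Fin d → Fin (2 ^ n), dyCube d n (fun i => (j i : ℕ)) := by
  ext x
  constructor
  · intro hx
    have hx' : ∀ i, (0:ℝ) ≤ x i ∧ x i ≤ 1 := by
      intro i
      have := hx i
      simpa using this
    have : ∀ i, ∃ m : ℕ, m < 2 ^ n ∧ (m : ℝ) / 2 ^ n ≤ x i ∧ x i ≤ ((m : ℝ) + 1) / 2 ^ n :=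
      fun i => exists_dyIdx n (x i) (hx' i).1 (hx' i).2
    choose m hm1 hm2 hm3 using this
    exact Set.mem_iUnion.mpr ⟨fun i => ⟨m i, hm1 i⟩, fun i => ⟨hm2 i, hm3 i⟩⟩
  · intro hx
    rcases Set.mem_iUnion.mp hx with ⟨j, hj⟩
    exact dyCube_subset_uCube (fun i => (j i).2) hj

lemma integral_uCube_split (d n : ℕ) (h : Euc d → ℝ) (hint : IntegrableOn h (uCube d)) :
    ∫ x in uCube d, h x = ∑ j : Fin d → Fin (2 ^ n), ∫ x in dyCube d n (fun i => (j i : ℕ)), h x := by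
  have hu := uCube_union d n
  rw [hu] at hint ⊢
  rw [integral_iUnion_ae (fun j => (measurableSet_dyCube d n _).nullMeasurableSet) ?_ hint,
    tsum_fintype]
  intro j j' hne
  obtain ⟨i, hi⟩ := Function.ne_iff.mp hne
  exact aedisjoint_dyCube i (fun hc => hi (Fin.val_injective hc))

lemma integral_dyCube_split (d n : ℕ) (k : Fin d → ℕ) (h : Euc d → ℝ)
    (hint : IntegrableOn h (dyCube d n k)) :
    ∫ x in dyCube d n k, h x =
      ∑ j : Fin d → Fin 2, ∫ x in dyCube d (n + 1) (fun i => 2 * k i + (j i : ℕ)), h x := by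
  have hu := dyCube_union d n k
  rw [hu] at hint ⊢
  rw [integral_iUnion_ae (fun j => (measurableSet_dyCube d (n+1) _).nullMeasurableSet) ?_ hint,
    tsum_fintype]
  intro j j' hne
  obtain ⟨i, hi⟩ := Function.ne_iff.mp hne
  refine aedisjoint_dyCube i ?_
  simp only [ne_eq, Nat.add_right_cancel_iff]
  intro hc
  exact hi (Fin.val_injective (by omega))

def corner (d n : ℕ) (k : Fin d → ℕ) : Euc d := WithLp.toLp 2 (fun i => (k i : ℝ) / 2 ^ n)

lemma corner_mem_dyCube (d n : ℕ) (k : Fin d → ℕ) : corner d n k ∈ dyCube d n k := by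
  intro i
  refine ⟨le_refl _, ?_⟩
  apply div_le_div_of_nonneg_right ?_ (by positivity) |>.trans_eq rfl
  linarith

lemma child_subset (d n : ℕ) (k : Fin d → ℕ) (j : Fin d → Fin 2) :
    dyCube d (n + 1) (fun i => 2 * k i + (j i : ℕ)) ⊆ dyCube d n k := by
  rw [dyCube_union d n k]
  exact Set.subset_iUnion (fun j : Fin d → Fin 2 =>
    dyCube d (n + 1) (fun i => 2 * k i + (j i : ℕ))) j

lemma norm_sub_le_of_mem_dyCube {d n : ℕ} {k : Fin d → ℕ} {x y : Euc d}
    (hx : x ∈ dyCube d n k) (hy : y ∈ dyCube d n k) :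
    ‖x - y‖ ≤ Real.sqrt d / 2 ^ n := by
  have hcoord : ∀ i, |x i - y i| ≤ 1 / 2 ^ n := by
    intro i
    have h1 := (hx i).1; have h2 := (hx i).2
    have h3 := (hy i).1; have h4 := (hy i).2
    rw [abs_le]
    have hD : (0:ℝ) < 2 ^ n := by positivity
    constructor
    · have : ((k i : ℝ) + 1) / 2 ^ n - (k i : ℝ) / 2 ^ n = 1 / 2 ^ n := by field_simp; ring
      linarith
    · have : ((k i : ℝ) + 1) / 2 ^ n - (k i : ℝ) / 2 ^ n = 1 / 2 ^ n := by field_simp; ring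
      linarith
  rw [EuclideanSpace.norm_eq]
  have hsum : (∑ i, ‖(x - y) i‖ ^ 2) ≤ (d : ℝ) * (1 / 2 ^ n) ^ 2 := by
    calc (∑ i, ‖(x - y) i‖ ^ 2) ≤ ∑ _i : Fin d, (1 / 2 ^ n : ℝ) ^ 2 := by
          apply Finset.sum_le_sum
          intro i _
          have : (x - y) i = x i - y i := rfl
          rw [this, Real.norm_eq_abs]
          have h := hcoord i
          have habs : (0:ℝ) ≤ |x i - y i| := abs_nonneg _
          nlinarith
      _ = (d : ℝ) * (1 / 2 ^ n) ^ 2 := by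
          rw [Finset.sum_const, Finset.card_univ, Fintype.card_fin, nsmul_eq_mul]
  calc Real.sqrt (∑ i, ‖(x - y) i‖ ^ 2) ≤ Real.sqrt ((d : ℝ) * (1 / 2 ^ n) ^ 2) :=
        Real.sqrt_le_sqrt hsum
    _ = Real.sqrt d * (1 / 2 ^ n) := by
        rw [Real.sqrt_mul (by positivity), Real.sqrt_sq (by positivity)]
    _ = Real.sqrt d / 2 ^ n := by ring

lemma continuousOn_of_holder {d : ℕ} {f : Euc d → ℝ} {L β : ℝ} (hβ0 : 0 < β) (hL : 0 ≤ L)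
    (hf : ∀ x ∈ uCube d, ∀ y ∈ uCube d, |f x - f y| ≤ L * ‖x - y‖ ^ β) :
    ContinuousOn f (uCube d) := by
  intro x hx
  rw [Metric.continuousWithinAt_iff]
  intro ε hε
  have hL1 : (0:ℝ) < L + 1 := by linarith
  refine ⟨(ε / (L + 1)) ^ (β⁻¹ : ℝ), by positivity, ?_⟩
  intro y hy hdist
  have h1 : |f y - f x| ≤ L * ‖y - x‖ ^ β := hf y hy x hx
  have h2 : ‖y - x‖ ^ β ≤ ((ε / (L + 1)) ^ (β⁻¹ : ℝ)) ^ β := by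
    apply Real.rpow_le_rpow (norm_nonneg _) ?_ hβ0.le
    rw [← dist_eq_norm]
    exact hdist.le
  rw [Real.rpow_inv_rpow (by positivity) hβ0.ne'] at h2
  have hq : (L + 1) * (ε / (L + 1)) = ε := mul_div_cancel₀ ε hL1.ne'
  have hqpos : 0 < ε / (L + 1) := by positivity
  have : L * (‖y - x‖ ^ β) ≤ L * (ε / (L + 1)) :=
    mul_le_mul_of_nonneg_left h2 hL
  rw [Real.dist_eq]
  nlinarith

lemma card_fun_fin (d m : ℕ) : Fintype.card (Fin d → Fin m) = m ^ d := by
  rw [Fintype.card_fun, Fintype.card_fin, Fintype.card_fin]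

lemma pow_rpow_swap (b : ℝ) (N : ℕ) : ((2:ℝ) ^ N) ^ b = ((2:ℝ) ^ b) ^ N := by
  rw [← Real.rpow_natCast 2 N, ← Real.rpow_mul (by norm_num), mul_comm,
    Real.rpow_mul (by norm_num), Real.rpow_natCast]

lemma dyVol_rpow (d n : ℕ) (hd : 0 < d) (c : ℝ) :
    dyVol d n ^ (c / d) = (((2:ℝ) ^ c)⁻¹) ^ n := by
  have hd' : (d : ℝ) ≠ 0 := by exact_mod_cast hd.ne'
  rw [dyVol, ← Real.rpow_natCast 2 (n * d), ← Real.rpow_neg (by norm_num),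
    ← Real.rpow_mul (by norm_num)]
  have : (-(n * d : ℕ) : ℝ) * (c / d) = c * n * (-1) := by
    push_cast; field_simp
  rw [this]
  rw [Real.rpow_mul (by norm_num), Real.rpow_mul (by norm_num), Real.rpow_natCast,
    Real.rpow_neg_one, inv_pow]

lemma rpow_npow (b : ℝ) (m : ℕ) : ((2:ℝ) ^ b) ^ m = (2:ℝ) ^ (b * m) := by
  rw [← Real.rpow_natCast ((2:ℝ) ^ b) m, ← Real.rpow_mul (by norm_num)]

lemma inv_rpow2 (b : ℝ) : ((2:ℝ) ^ b)⁻¹ = (2:ℝ) ^ (-b) := by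
  rw [Real.rpow_neg (by norm_num)]

def childEquiv (d n : ℕ) : (Fin d → Fin (2 ^ n)) × (Fin d → Fin 2) ≃ (Fin d → Fin (2 ^ (n + 1))) where
  toFun p i := ⟨2 * (p.1 i : ℕ) + (p.2 i : ℕ), by
    have h1 := (p.1 i).2; have h2 := (p.2 i).2; have h3 : (2:ℕ)^(n+1) = 2^n * 2 := pow_succ 2 n
    omega⟩
  invFun j := (fun i => ⟨(j i : ℕ) / 2, by
      have h1 := (j i).2; have h2 : (2:ℕ)^(n+1) = 2^n * 2 := pow_succ 2 n; omega⟩,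
    fun i => ⟨(j i : ℕ) % 2, Nat.mod_lt _ two_pos⟩)
  left_inv p := by
    refine Prod.ext ?_ ?_ <;> funext i <;> apply Fin.ext <;> simp <;> omega
  right_inv j := by
    funext i; apply Fin.ext; simp; omega

lemma telescope_const (d : ℕ) (α β : ℝ) (n : ℕ) :
    (((2:ℝ) ^ n) ^ d * 2 ^ d) * ((((2:ℝ) ^ β)⁻¹) ^ n * (((2:ℝ) ^ (α + d - 1))⁻¹) ^ (n + 1))
      = (2:ℝ) ^ ((1:ℝ) - α) * ((2:ℝ) ^ ((1:ℝ) - α - β)) ^ n := by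
  have e1 : ((2:ℝ) ^ n) ^ d = (2:ℝ) ^ (((n * d : ℕ) : ℝ)) := by
    rw [Real.rpow_natCast, pow_mul]
  have e2 : ((2:ℝ) ^ d) = (2:ℝ) ^ ((d : ℕ) : ℝ) := by rw [Real.rpow_natCast]
  rw [e1, e2, inv_rpow2, inv_rpow2, rpow_npow, rpow_npow, rpow_npow,
    ← Real.rpow_add (by norm_num), ← Real.rpow_add (by norm_num),
    ← Real.rpow_add (by norm_num), ← Real.rpow_add (by norm_num)]
  congr 1
  push_cast
  ring

/-- **Hölder continuous functions have bounded fractional variation**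
(example in Section 7): if `α + β > 1` then `V̂^α f ≤ C (‖f‖_∞ + Lip^β(f))`. -/
theorem holder_bounded_fracVar (d : ℕ) (hd : 0 < d) (α β : ℝ)
    (hα0 : 0 < α) (hα1 : α < 1) (hβ0 : 0 < β) (hβ1 : β < 1) (hαβ : 1 < α + β) :
    ∃ C : ℝ, 0 ≤ C ∧ ∀ (f : Euc d → ℝ) (F L : ℝ),
      (∀ x ∈ uCube d, |f x| ≤ F) →
      (∀ x ∈ uCube d, ∀ y ∈ uCube d, |f x - f y| ≤ L * ‖x - y‖ ^ β) →
      hatV d α f ≤ ENNReal.ofReal (C * (F + L)) := by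
  have hd' : (1:ℝ) ≤ d := by exact_mod_cast hd
  have hρ0 : 0 < (2:ℝ) ^ ((1:ℝ) - α - β) := Real.rpow_pos_of_pos (by norm_num) _
  have hρ1 : (2:ℝ) ^ ((1:ℝ) - α - β) < 1 :=
    Real.rpow_lt_one_of_one_lt_of_neg (by norm_num) (by linarith)
  have h2β : 1 < (2:ℝ) ^ β :=
    (Real.one_lt_rpow_iff_of_pos (by norm_num)).mpr (Or.inl ⟨by norm_num, hβ0⟩)
  have hq0 : 0 ≤ (((2:ℝ) ^ β)⁻¹) := by positivity
  have hq1 : (((2:ℝ) ^ β)⁻¹) < 1 := by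
    rw [inv_lt_one_iff₀]; right; exact h2β
  have hC₁0 : 0 ≤ (Real.sqrt d) ^ β * (2:ℝ) ^ ((1:ℝ) - α) := by positivity
  have hgeo0 : 0 ≤ (1 - (2:ℝ) ^ ((1:ℝ) - α - β))⁻¹ := by
    rw [inv_nonneg]; linarith
  refine ⟨1 + ((Real.sqrt d) ^ β * (2:ℝ) ^ ((1:ℝ) - α)) * (1 - (2:ℝ) ^ ((1:ℝ) - α - β))⁻¹,
    by positivity, ?_⟩
  intro f F L hF hL
  have zero_mem : (0 : Euc d) ∈ uCube d := by
    intro i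
    have : (0 : Euc d) i = 0 := rfl
    rw [this]; norm_num
  have ones_mem : (WithLp.toLp 2 (fun _ => (1:ℝ)) : Euc d) ∈ uCube d := by
    intro i; norm_num
  have hF0 : 0 ≤ F := le_trans (abs_nonneg _) (hF 0 zero_mem)
  have hL0 : 0 ≤ L := by
    have hxy : ‖(0 : Euc d) - (WithLp.toLp 2 (fun _ => (1:ℝ)) : Euc d)‖ = Real.sqrt d := by
      rw [EuclideanSpace.norm_eq]
      have : ∀ i : Fin d, ‖((0 : Euc d) - (WithLp.toLp 2 (fun _ => (1:ℝ)) : Euc d)) i‖ ^ 2 = 1 := by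
        intro i
        have : ((0 : Euc d) - (WithLp.toLp 2 (fun _ => (1:ℝ)) : Euc d)) i = -1 := by
          show (0:ℝ) - 1 = -1; ring
        rw [this]; norm_num
      simp only [this]
      rw [Finset.sum_const, Finset.card_univ, Fintype.card_fin, nsmul_eq_mul, mul_one]
    have hs : 0 < Real.sqrt d := Real.sqrt_pos.mpr (by positivity)
    have h1 := hL 0 zero_mem _ ones_mem
    rw [hxy] at h1
    have h2 : 0 < Real.sqrt (d : ℝ) ^ β := Real.rpow_pos_of_pos hs β
    nlinarith [abs_nonneg (f 0 - f (WithLp.toLp 2 (fun _ => (1:ℝ)) : Euc d))]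
  rw [hatV]
  refine iSup_le fun g => iSup_le fun hg => iSup_le fun hgc => ?_
  apply ENNReal.ofReal_le_ofReal
  have huMeas : MeasurableSet (uCube d) := measurableSet_dyCube d 0 _
  haveI hfinM : IsFiniteMeasure (volume.restrict (uCube d)) := by
    constructor
    rw [Measure.restrict_apply_univ]
    rw [show uCube d = dyCube d 0 (fun _ => 0) from rfl, volume_dyCube]
    exact ENNReal.ofReal_lt_top
  set M : ℝ := (eLpNormEssSup g (volume.restrict (uCube d))).toReal with hMdef
  have hM0 : 0 ≤ M := ENNReal.toReal_nonneg
  have hMfin : eLpNormEssSup g (volume.restrict (uCube d)) ≠ ⊤ := by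
    have h := hg.2
    rw [eLpNorm_exponent_top] at h
    exact h.ne
  have hMae : ∀ᵐ x ∂(volume.restrict (uCube d)), ‖g x‖ ≤ M := by
    filter_upwards [ae_le_eLpNormEssSup (f := g)] with x hx
    calc ‖g x‖ = ((‖g x‖₊ : ℝ≥0∞)).toReal := by simp
      _ ≤ M := ENNReal.toReal_mono hMfin hx
  have hcont : ContinuousOn f (uCube d) := continuousOn_of_holder hβ0 hL0 hL
  have hfae : AEStronglyMeasurable f (volume.restrict (uCube d)) :=
    hcont.aestronglyMeasurable huMeas
  have hgint : IntegrableOn g (uCube d) := hg.integrable le_top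
  have hfg_int : IntegrableOn (fun x => f x * g x) (uCube d) := by
    apply Integrable.bdd_mul (c := F) hgint hfae
    filter_upwards [ae_restrict_mem huMeas] with x hx
    simpa [Real.norm_eq_abs] using hF x hx
  have hdyVol0 : ∀ n : ℕ, 0 ≤ dyVol d n := by
    intro n; unfold dyVol; positivity
  have est1 : ∀ n (k : Fin d → ℕ), (∀ i, k i < 2 ^ n) →
      |(∫ x in dyCube d n k, f x * g x) - f (corner d n k) * ∫ x in dyCube d n k, g x|
        ≤ (L * ((Real.sqrt d / 2 ^ n) ^ β) * M) * dyVol d n := by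
    intro n k hk
    have hKsub := dyCube_subset_uCube hk
    have hgK : IntegrableOn g (dyCube d n k) := hgint.mono_set hKsub
    have hfgK : IntegrableOn (fun x => f x * g x) (dyCube d n k) := hfg_int.mono_set hKsub
    have hvol : volume (dyCube d n k) = ENNReal.ofReal (dyVol d n) := volume_dyCube d n k
    have hvlt : volume (dyCube d n k) < ∞ := by rw [hvol]; exact ENNReal.ofReal_lt_top
    have heq : (∫ x in dyCube d n k, f x * g x) - f (corner d n k) * ∫ x in dyCube d n k, g x
        = ∫ x in dyCube d n k, (f x - f (corner d n k)) * g x := by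
      have hfun : (fun x => (f x - f (corner d n k)) * g x)
          = fun x => f x * g x - f (corner d n k) * g x := by funext x; ring
      rw [hfun, integral_sub hfgK (hgK.const_mul _), integral_const_mul]
    have hMK : ∀ᵐ x ∂volume.restrict (dyCube d n k), ‖g x‖ ≤ M :=
      hMae.filter_mono (ae_mono (Measure.restrict_mono hKsub le_rfl))
    have hb := norm_setIntegral_le_of_norm_le_const_ae
        (C := L * ((Real.sqrt d / 2 ^ n) ^ β) * M) (f := fun x => (f x - f (corner d n k)) * g x)
        hvlt ?_
    · rw [heq, ← Real.norm_eq_abs]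
      rw [measureReal_def, hvol, ENNReal.toReal_ofReal (hdyVol0 n)] at hb
      exact hb
    · filter_upwards [ae_restrict_mem (measurableSet_dyCube d n k), hMK] with x hx hgx
      rw [norm_mul]
      have hxU : x ∈ uCube d := hKsub hx
      have hcU : corner d n k ∈ uCube d := hKsub (corner_mem_dyCube d n k)
      have h1 : ‖f x - f (corner d n k)‖ ≤ L * (Real.sqrt d / 2 ^ n) ^ β := by
        rw [Real.norm_eq_abs]
        refine (hL x hxU _ hcU).trans ?_
        apply mul_le_mul_of_nonneg_left ?_ hL0
        exact Real.rpow_le_rpow (norm_nonneg _)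
          (norm_sub_le_of_mem_dyCube hx (corner_mem_dyCube d n k)) hβ0.le
      exact mul_le_mul h1 hgx (norm_nonneg _)
        (mul_nonneg hL0 (Real.rpow_nonneg (by positivity) _))
  have hgc' : ∀ n (k : Fin d → ℕ), (∀ i, k i < 2 ^ n) →
      |∫ x in dyCube d n k, g x| ≤ (((2:ℝ) ^ (α + (d:ℝ) - 1))⁻¹) ^ n := by
    intro n k hk
    have h := hgc n k hk
    rwa [dyVol_rpow d n hd (α + (d:ℝ) - 1)] at h
  set T : ℕ → ℝ := fun m => ∑ j : Fin d → Fin (2 ^ m),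
      f (corner d m (fun i => (j i : ℕ))) * ∫ x in dyCube d m (fun i => (j i : ℕ)), g x
    with hTdef
  have e1 : ∀ m : ℕ, (Real.sqrt d / 2 ^ m : ℝ) ^ β
      = Real.sqrt d ^ β * (((2:ℝ) ^ β)⁻¹) ^ m := by
    intro m
    rw [Real.div_rpow (Real.sqrt_nonneg _) (by positivity), pow_rpow_swap,
      div_eq_mul_inv, inv_pow]
  have hT0 : |T 0| ≤ F := by
    have huniq : ∀ j : Fin d → Fin (2 ^ 0), (fun i => ((j i : ℕ))) = fun _ : Fin d => (0:ℕ) := by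
      intro j; funext i; have := (j i).2; omega
    have hval : T 0 = f (corner d 0 (fun _ => 0)) * ∫ x in dyCube d 0 (fun _ : Fin d => (0:ℕ)), g x := by
      rw [hTdef]
      calc (∑ j : Fin d → Fin (2 ^ 0),
            f (corner d 0 (fun i => (j i : ℕ))) * ∫ x in dyCube d 0 (fun i => (j i : ℕ)), g x)
          = ∑ _j : Fin d → Fin (2 ^ 0),
            f (corner d 0 (fun _ : Fin d => (0:ℕ))) * ∫ x in dyCube d 0 (fun _ : Fin d => (0:ℕ)), g x := by
            refine Finset.sum_congr rfl fun j _ => by rw [huniq j]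
        _ = (Fintype.card (Fin d → Fin (2 ^ 0))) •
            (f (corner d 0 (fun _ : Fin d => (0:ℕ))) * ∫ x in dyCube d 0 (fun _ : Fin d => (0:ℕ)), g x) := by
            rw [Finset.sum_const, Finset.card_univ]
        _ = _ := by rw [card_fun_fin]; norm_num
    rw [hval, abs_mul]
    have hcU : corner d 0 (fun _ : Fin d => (0:ℕ)) ∈ uCube d := corner_mem_dyCube d 0 _
    have hg0 := hgc' 0 (fun _ => 0) (fun i => by norm_num)
    rw [pow_zero] at hg0
    calc |f (corner d 0 (fun _ : Fin d => (0:ℕ)))| * |∫ x in dyCube d 0 (fun _ : Fin d => (0:ℕ)), g x|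
        ≤ F * 1 := mul_le_mul (hF _ hcU) hg0 (abs_nonneg _) hF0
      _ = F := mul_one F
  have happrox : ∀ N : ℕ, |(∫ x in uCube d, f x * g x) - T N|
      ≤ L * M * Real.sqrt d ^ β * (((2:ℝ) ^ β)⁻¹) ^ N := by
    intro N
    rw [integral_uCube_split d N _ hfg_int, hTdef, ← Finset.sum_sub_distrib]
    refine (Finset.abs_sum_le_sum_abs _ _).trans ?_
    refine (Finset.sum_le_sum fun j (_ : j ∈ Finset.univ) =>
      est1 N (fun i => ((j i : ℕ))) (fun i => (j i).2)).trans ?_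
    rw [Finset.sum_const, Finset.card_univ, card_fun_fin, nsmul_eq_mul]
    rw [e1 N]
    have e2 : (((2:ℝ) ^ N) ^ d) * dyVol d N = 1 := by
      unfold dyVol
      rw [← pow_mul]
      exact mul_inv_cancel₀ (by positivity)
    push_cast
    refine le_of_eq ?_
    calc ((2:ℝ) ^ N) ^ d * ((L * (Real.sqrt d ^ β * (((2:ℝ) ^ β)⁻¹) ^ N) * M) * dyVol d N)
        = ((((2:ℝ) ^ N) ^ d) * dyVol d N) * (L * M * Real.sqrt d ^ β * (((2:ℝ) ^ β)⁻¹) ^ N) := by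
          ring
      _ = L * M * Real.sqrt d ^ β * (((2:ℝ) ^ β)⁻¹) ^ N := by rw [e2, one_mul]
  have hstep : ∀ n : ℕ, |T (n + 1) - T n|
      ≤ (Real.sqrt d ^ β * (2:ℝ) ^ ((1:ℝ) - α)) * L * ((2:ℝ) ^ ((1:ℝ) - α - β)) ^ n := by
    intro n
    have hTn : T n = ∑ j : Fin d → Fin (2 ^ n), ∑ b : Fin d → Fin 2,
        f (corner d n (fun i => (j i : ℕ))) *
          ∫ x in dyCube d (n + 1) (fun i => 2 * (j i : ℕ) + (b i : ℕ)), g x := by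
      rw [hTdef]
      refine Finset.sum_congr rfl fun j _ => ?_
      rw [integral_dyCube_split d n _ g
        (hgint.mono_set (dyCube_subset_uCube (fun i => (j i).2))), Finset.mul_sum]
    have hTn1 : T (n + 1) = ∑ j : Fin d → Fin (2 ^ n), ∑ b : Fin d → Fin 2,
        f (corner d (n + 1) (fun i => 2 * (j i : ℕ) + (b i : ℕ))) *
          ∫ x in dyCube d (n + 1) (fun i => 2 * (j i : ℕ) + (b i : ℕ)), g x := by
      rw [hTdef]
      beta_reduce
      rw [← Equiv.sum_comp (childEquiv d n) (fun j' : Fin d → Fin (2 ^ (n + 1)) =>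
        f (corner d (n + 1) (fun i => ((j' i : ℕ)))) *
          ∫ x in dyCube d (n + 1) (fun i => ((j' i : ℕ))), g x)]
      rw [Fintype.sum_prod_type]
      rfl
    rw [hTn1, hTn, ← Finset.sum_sub_distrib]
    simp only [← Finset.sum_sub_distrib]
    refine (Finset.abs_sum_le_sum_abs _ _).trans ?_
    have hterm : ∀ (j : Fin d → Fin (2 ^ n)) (b : Fin d → Fin 2),
        |f (corner d (n + 1) (fun i => 2 * (j i : ℕ) + (b i : ℕ))) *
            (∫ x in dyCube d (n + 1) (fun i => 2 * (j i : ℕ) + (b i : ℕ)), g x) -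
          f (corner d n (fun i => (j i : ℕ))) *
            ∫ x in dyCube d (n + 1) (fun i => 2 * (j i : ℕ) + (b i : ℕ)), g x|
        ≤ (L * ((Real.sqrt d / 2 ^ n) ^ β)) * ((((2:ℝ) ^ (α + (d:ℝ) - 1))⁻¹) ^ (n + 1)) := by
      intro j b
      have hk' : ∀ i, 2 * (j i : ℕ) + (b i : ℕ) < 2 ^ (n + 1) := by
        intro i
        have h1 := (j i).2; have h2 := (b i).2
        have h3 : (2:ℕ) ^ (n + 1) = 2 ^ n * 2 := pow_succ 2 n
        omega
      have hcc : corner d (n + 1) (fun i => 2 * (j i : ℕ) + (b i : ℕ))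
          ∈ dyCube d n (fun i => (j i : ℕ)) :=
        child_subset d n _ b (corner_mem_dyCube d (n + 1) _)
      have hc : corner d n (fun i => (j i : ℕ)) ∈ dyCube d n (fun i => (j i : ℕ)) :=
        corner_mem_dyCube d n _
      have hsubU : dyCube d n (fun i => (j i : ℕ)) ⊆ uCube d :=
        dyCube_subset_uCube (fun i => (j i).2)
      rw [← sub_mul, abs_mul]
      refine mul_le_mul ?_ (hgc' (n + 1) _ hk') (abs_nonneg _)
        (mul_nonneg hL0 (Real.rpow_nonneg (by positivity) _))
      refine (hL _ (hsubU hcc) _ (hsubU hc)).trans ?_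
      refine mul_le_mul_of_nonneg_left ?_ hL0
      exact Real.rpow_le_rpow (norm_nonneg _) (norm_sub_le_of_mem_dyCube hcc hc) hβ0.le
    refine (Finset.sum_le_sum fun j (_ : j ∈ Finset.univ) =>
      (Finset.abs_sum_le_sum_abs _ _).trans
        (Finset.sum_le_sum fun b (_ : b ∈ Finset.univ) => hterm j b)).trans ?_
    rw [Finset.sum_const, Finset.sum_const, Finset.card_univ, Finset.card_univ,
      card_fun_fin, card_fun_fin, smul_smul, nsmul_eq_mul]
    rw [e1 n]
    push_cast
    refine le_of_eq ?_
    have htc := telescope_const d α β n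
    calc ((2:ℝ) ^ n) ^ d * 2 ^ d *
          ((L * (Real.sqrt d ^ β * (((2:ℝ) ^ β)⁻¹) ^ n)) * ((((2:ℝ) ^ (α + (d:ℝ) - 1))⁻¹) ^ (n + 1)))
        = ((((2:ℝ) ^ n) ^ d * 2 ^ d) * (((((2:ℝ) ^ β)⁻¹) ^ n) * ((((2:ℝ) ^ (α + (d:ℝ) - 1))⁻¹) ^ (n + 1))))
            * (L * Real.sqrt d ^ β) := by ring
      _ = ((2:ℝ) ^ ((1:ℝ) - α) * ((2:ℝ) ^ ((1:ℝ) - α - β)) ^ n) * (L * Real.sqrt d ^ β) := by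
          rw [htc]
      _ = (Real.sqrt d ^ β * (2:ℝ) ^ ((1:ℝ) - α)) * L * ((2:ℝ) ^ ((1:ℝ) - α - β)) ^ n := by ring
  have hTb : ∀ N : ℕ, |T N| ≤ F + (Real.sqrt d ^ β * (2:ℝ) ^ ((1:ℝ) - α)) * L *
      (1 - (2:ℝ) ^ ((1:ℝ) - α - β))⁻¹ := by
    intro N
    have htel : T N = T 0 + ∑ n ∈ Finset.range N, (T (n + 1) - T n) := by
      rw [Finset.sum_range_sub]; ring
    rw [htel]
    refine (abs_add_le _ _).trans ?_
    refine add_le_add hT0 ?_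
    refine (Finset.abs_sum_le_sum_abs _ _).trans ?_
    refine (Finset.sum_le_sum fun n (_ : n ∈ Finset.range N) => hstep n).trans ?_
    rw [← Finset.mul_sum]
    refine mul_le_mul_of_nonneg_left ?_ (mul_nonneg hC₁0 hL0)
    refine ((summable_geometric_of_lt_one hρ0.le hρ1).sum_le_tsum (Finset.range N) (fun n _ => by positivity)
      ).trans ?_
    rw [tsum_geometric_of_lt_one hρ0.le hρ1]
  have hfinal : ∀ N : ℕ, (∫ x in uCube d, f x * g x)
      ≤ (F + (Real.sqrt d ^ β * (2:ℝ) ^ ((1:ℝ) - α)) * L * (1 - (2:ℝ) ^ ((1:ℝ) - α - β))⁻¹)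
        + L * M * Real.sqrt d ^ β * (((2:ℝ) ^ β)⁻¹) ^ N := by
    intro N
    have h1 := happrox N
    have h2 := hTb N
    have h3 := le_abs_self ((∫ x in uCube d, f x * g x) - T N)
    have h4 := le_abs_self (T N)
    linarith
  have htend : Tendsto (fun N : ℕ =>
      (F + (Real.sqrt d ^ β * (2:ℝ) ^ ((1:ℝ) - α)) * L * (1 - (2:ℝ) ^ ((1:ℝ) - α - β))⁻¹)
        + L * M * Real.sqrt d ^ β * (((2:ℝ) ^ β)⁻¹) ^ N) atTop
      (nhds ((F + (Real.sqrt d ^ β * (2:ℝ) ^ ((1:ℝ) - α)) * L * (1 - (2:ℝ) ^ ((1:ℝ) - α - β))⁻¹)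
        + L * M * Real.sqrt d ^ β * 0)) :=
    tendsto_const_nhds.add
      ((tendsto_pow_atTop_nhds_zero_of_lt_one hq0 hq1).const_mul _)
  have hlim := ge_of_tendsto htend (Filter.Eventually.of_forall hfinal)
  rw [mul_zero, add_zero] at hlim
  refine hlim.trans ?_
  have hx1 : 0 ≤ (Real.sqrt d ^ β * (2:ℝ) ^ ((1:ℝ) - α)) * (1 - (2:ℝ) ^ ((1:ℝ) - α - β))⁻¹ :=
    mul_nonneg hC₁0 hgeo0
  nlinarith [mul_nonneg hx1 hF0, mul_nonneg hx1 hL0]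


end
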